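/- arXiv:2311.00347 — 2 statements merged into one kernel-verified Lean document; each statement's English description precedes it below -/
import Mathlib

section
/- Let k ∈ W^{1,1}(0,T), H ∈ C¹(ℝ), and u ∈ L¹(0,T) such that H(u), H'(u)u, and H'(u)(k'*u) belong to L¹(0,T). Then for almost all t ∈ (0,T): H'(u(t)) d/dt (k*u)(t) = d/dt (k*H(u))(t) + (H'(u(t))u(t) − H(u(t)))k(t) + ∫₀^t [H(u(t−s)) − H(u(t)) − H'(u(t))(u(t−s) − u(t))](−k'(s)) ds, where (k*v)(t) = ∫₀^t k(t−τ)v(τ)dτ. -/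
open MeasureTheory intervalIntegral

/-- Convolution on the positive half-line: `(k*v)(t) = ∫₀^t k(t-τ) v(τ) dτ`. -/
noncomputable def halfConv (k v : ℝ → ℝ) (t : ℝ) : ℝ := ∫ τ in (0:ℝ)..t, k (t - τ) * v τ

/-!
Write `k t = k₀ + ∫₀ᵗ k'` on `(0, T)`. By Fubini, `∫₀ᵗ (k' * v) = (∫₀^· k') * v`, hence
`(k * v)(t) = ∫₀ᵗ (k₀ v + k' * v)`, and the Lebesgue differentiation theorem gives
`∂ₜ(k * v) = k₀ v + k' * v` almost everywhere. Applied to `v = u` and `v = H ∘ u`, this turns the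
identity into a linear relation between `k₀`, `∫₀ᵗ k' = k t - k₀` and the convolutions
`k' * u`, `k' * H(u)`, which holds at every `t` where these convolution integrals converge.
-/

open Set

theorem exists_eq_add_integral_of_hasDerivAt {a b : ℝ} {k k' : ℝ → ℝ}
    (hk : ∀ t ∈ Ioo a b, HasDerivAt k (k' t) t) (hk' : IntegrableOn k' (Ioo a b)) :
    ∃ k₀, ∀ t ∈ Ioo a b, k t = k₀ + ∫ s in a..t, k' s := by
  rcases (Ioo a b).eq_empty_or_nonempty with hempty | ⟨c, hc⟩
  · exact ⟨0, by simp [hempty]⟩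
  refine ⟨k c - ∫ s in a..c, k' s, fun t ht => ?_⟩
  have hct : uIcc c t ⊆ Ioo a b := ordConnected_Ioo.uIcc_subset hc ht
  have hac : IntervalIntegrable k' volume a c :=
    (intervalIntegrable_iff_integrableOn_Ioo_of_le hc.1.le).2
      (hk'.mono_set (Ioo_subset_Ioo_right hc.2.le))
  rw [← integral_add_adjacent_intervals hac (hk'.mono_set hct).intervalIntegrable,
    integral_eq_sub_of_hasDerivAt (fun x hx => hk x (hct hx)) (hk'.mono_set hct).intervalIntegrable]
  ring

theorem halfConv_comm (f g : ℝ → ℝ) (t : ℝ) : halfConv f g t = halfConv g f t := by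
  have := integral_comp_sub_left (fun τ => g (t - τ) * f τ) (a := 0) (b := t) t
  simp only [sub_sub_cancel, sub_self, sub_zero] at this
  rw [halfConv, halfConv, ← this]
  exact integral_congr fun τ _ => mul_comm _ _

section ZeroExtension

variable {T t : ℝ} {f g : ℝ → ℝ}

/- For `0 ≤ t ≤ T`, `halfConv f g t` is the convolution on `ℝ` of the zero extensions of `g` and
`f` off `(0, T)`, evaluated at `t`; this brings Mathlib's convolution theory to bear. -/
theorem indicator_mul_indicator_sub (ht : t ≤ T) (τ : ℝ) :
    (Ioo 0 T).indicator g τ * (Ioo 0 T).indicator f (t - τ)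
      = (Ioo 0 t).indicator (fun τ => f (t - τ) * g τ) τ := by
  simp only [indicator_apply, mem_Ioo]
  split_ifs <;> grind

theorem halfConv_eq_integral_indicator (ht₀ : 0 ≤ t) (ht : t ≤ T) :
    halfConv f g t = ∫ τ, (Ioo 0 T).indicator g τ * (Ioo 0 T).indicator f (t - τ) := by
  simp_rw [indicator_mul_indicator_sub ht, MeasureTheory.integral_indicator measurableSet_Ioo]
  rw [halfConv, integral_of_le ht₀, integral_Ioc_eq_integral_Ioo]

theorem integrableOn_halfConv (hf : IntegrableOn f (Ioo 0 T)) (hg : IntegrableOn g (Ioo 0 T)) :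
    IntegrableOn (halfConv f g) (Ioo 0 T) := by
  have hconv := (hg.integrable_indicator measurableSet_Ioo).integrable_convolution
    (ContinuousLinearMap.mul ℝ ℝ) (hf.integrable_indicator measurableSet_Ioo)
  refine hconv.integrableOn.congr_fun (fun t ht => ?_) measurableSet_Ioo
  rw [halfConv_eq_integral_indicator ht.1.le ht.2.le]
  rfl

theorem ae_intervalIntegrable_halfConv_integrand (hf : IntegrableOn f (Ioo 0 T))
    (hg : IntegrableOn g (Ioo 0 T)) :
    ∀ᵐ t ∂volume.restrict (Ioo 0 T), IntervalIntegrable (fun τ => f (t - τ) * g τ) volume 0 t := by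
  have hconv := (hg.integrable_indicator measurableSet_Ioo).ae_convolution_exists
    (ContinuousLinearMap.mul ℝ ℝ) (hf.integrable_indicator measurableSet_Ioo)
  filter_upwards [ae_restrict_of_ae hconv, ae_restrict_mem measurableSet_Ioo] with t hconv_t ht
  have hind : Integrable ((Ioo 0 t).indicator fun τ => f (t - τ) * g τ) := by
    simpa only [ContinuousLinearMap.mul_apply', indicator_mul_indicator_sub ht.2.le]
      using hconv_t.integrable
  exact (intervalIntegrable_iff_integrableOn_Ioo_of_le ht.1.le).2
    ((integrable_indicator_iff measurableSet_Ioo).1 hind)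

theorem integral_halfConv (hf : IntegrableOn f (Ioo 0 T)) (hg : IntegrableOn g (Ioo 0 T))
    (ht₀ : 0 ≤ t) (ht : t ≤ T) :
    ∫ r in 0..t, halfConv f g r = halfConv (fun s => ∫ σ in 0..s, f σ) g t := by
  set fE := (Ioo 0 T).indicator f with hfE
  set gE := (Ioo 0 T).indicator g with hgE
  have hint : Integrable (Function.uncurry fun r τ => gE τ * fE (r - τ))
      ((volume.restrict (Ioc 0 t)).prod volume) :=
    ((hg.integrable_indicator measurableSet_Ioo).convolution_integrand
      (ContinuousLinearMap.mul ℝ ℝ) (hf.integrable_indicator measurableSet_Ioo)).mono_measure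
      (Measure.prod_mono Measure.restrict_le_self le_rfl)
  have hinner (τ : ℝ) : ∫ r in Ioc 0 t, gE τ * fE (r - τ)
      = (Ioo 0 t).indicator (fun τ => (∫ σ in 0..(t - τ), f σ) * g τ) τ := by
    rw [MeasureTheory.integral_const_mul, ← integral_of_le ht₀, integral_comp_sub_right fE]
    by_cases hτ : τ ∈ Ioo 0 T
    · have hshift : ∫ σ in (0 - τ)..(t - τ), fE σ = ∫ σ in Ioc 0 (t - τ), f σ := by
        rw [integral_of_le (by linarith), hfE, setIntegral_indicator measurableSet_Ioo]
        congr 2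
        ext σ
        grind
      rw [hshift, hgE, indicator_of_mem hτ]
      by_cases hτt : τ < t
      · rw [indicator_of_mem (show τ ∈ Ioo 0 t from ⟨hτ.1, hτt⟩), integral_of_le (by linarith),
          mul_comm]
      · rw [indicator_of_notMem fun h => hτt h.2, Ioc_eq_empty (by linarith),
          Measure.restrict_empty, integral_zero_measure, mul_zero]
    · rw [hgE, indicator_of_notMem hτ, zero_mul,
        indicator_of_notMem fun h => hτ ⟨h.1, h.2.trans_le ht⟩]
  calc ∫ r in 0..t, halfConv f g r = ∫ r in Ioc 0 t, ∫ τ, gE τ * fE (r - τ) := by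
        rw [integral_of_le ht₀]
        exact setIntegral_congr_fun measurableSet_Ioc fun r hr =>
          halfConv_eq_integral_indicator hr.1.le (hr.2.trans ht)
    _ = ∫ τ, ∫ r in Ioc 0 t, gE τ * fE (r - τ) := integral_integral_swap hint
    _ = _ := by
      simp_rw [hinner]
      rw [MeasureTheory.integral_indicator measurableSet_Ioo, halfConv, integral_of_le ht₀,
        integral_Ioc_eq_integral_Ioo]

end ZeroExtension

section Derivative

variable {T k₀ : ℝ} {k k' v : ℝ → ℝ}

theorem halfConv_eq_integral (hk : ∀ s ∈ Ioo 0 T, k s = k₀ + ∫ σ in 0..s, k' σ)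
    (hk' : IntegrableOn k' (Ioo 0 T)) (hv : IntegrableOn v (Ioo 0 T)) {t : ℝ}
    (ht₀ : 0 ≤ t) (ht : t ≤ T) :
    halfConv k v t = ∫ r in 0..t, (k₀ * v r + halfConv k' v r) := by
  have hsub : Ioo 0 t ⊆ Ioo 0 T := Ioo_subset_Ioo_right ht
  have hv_t : IntervalIntegrable v volume 0 t :=
    (intervalIntegrable_iff_integrableOn_Ioo_of_le ht₀).2 (hv.mono_set hsub)
  have hconv_t : IntervalIntegrable (halfConv k' v) volume 0 t :=
    (intervalIntegrable_iff_integrableOn_Ioo_of_le ht₀).2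
      ((integrableOn_halfConv hk' hv).mono_set hsub)
  have hprimitive : ContinuousOn (fun τ => ∫ σ in 0..(t - τ), k' σ) (uIcc 0 t) := by
    have hk'_t : IntegrableOn k' (uIcc 0 t) := by
      rw [uIcc_of_le ht₀, integrableOn_Icc_iff_integrableOn_Ioo]
      exact hk'.mono_set hsub
    refine (continuousOn_primitive_interval hk'_t).comp (continuousOn_const.sub continuousOn_id)
      fun τ hτ => ?_
    rw [uIcc_of_le ht₀] at hτ ⊢
    exact ⟨by linarith [hτ.2], by linarith [hτ.1]⟩
  calc halfConv k v t = ∫ τ in 0..t, (k₀ * v τ + (∫ σ in 0..(t - τ), k' σ) * v τ) :=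
        integral_congr_Ioo_of_le ht₀ fun τ hτ => by
          rw [hk (t - τ) ⟨by linarith [hτ.2], by linarith [hτ.1]⟩]
          ring
    _ = k₀ * (∫ τ in 0..t, v τ) + halfConv (fun s => ∫ σ in 0..s, k' σ) v t := by
        rw [integral_add (hv_t.const_mul k₀) (hv_t.continuousOn_mul hprimitive),
          intervalIntegral.integral_const_mul]
        rfl
    _ = _ := by
      rw [← integral_halfConv hk' hv ht₀ ht, integral_add (hv_t.const_mul k₀) hconv_t,
        intervalIntegral.integral_const_mul]

theorem ae_hasDerivAt_halfConv (hT : 0 ≤ T) (hk : ∀ s ∈ Ioo 0 T, k s = k₀ + ∫ σ in 0..s, k' σ)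
    (hk' : IntegrableOn k' (Ioo 0 T)) (hv : IntegrableOn v (Ioo 0 T)) :
    ∀ᵐ t ∂volume.restrict (Ioo 0 T),
      HasDerivAt (halfConv k v) (k₀ * v t + halfConv k' v t) t := by
  have hint : IntervalIntegrable (fun r => k₀ * v r + halfConv k' v r) volume 0 T :=
    (intervalIntegrable_iff_integrableOn_Ioo_of_le hT).2
      ((hv.const_mul k₀).add (integrableOn_halfConv hk' hv))
  filter_upwards [ae_restrict_of_ae hint.ae_hasDerivAt_integral,
    ae_restrict_mem measurableSet_Ioo] with t hderiv ht
  rw [uIcc_of_le hT] at hderiv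
  refine (hderiv (Ioo_subset_Icc_self ht) 0 ⟨le_rfl, hT⟩).congr_of_eventuallyEq ?_
  filter_upwards [isOpen_Ioo.mem_nhds ht] with s hs
  exact halfConv_eq_integral hk hk' hv hs.1.le hs.2.le

end Derivative

theorem stmt_6_general (T : ℝ) (hT : 0 < T) (k k' u H H' : ℝ → ℝ)
    (hk : ∀ t ∈ Set.Ioo 0 T, HasDerivAt k (k' t) t)
    (hk' : IntegrableOn k' (Set.Ioo 0 T))
    (hu : IntegrableOn u (Set.Ioo 0 T))
    (hHu : IntegrableOn (fun t => H (u t)) (Set.Ioo 0 T)) :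
    ∀ᵐ t ∂(volume.restrict (Set.Ioo 0 T)),
      H' (u t) * deriv (halfConv k u) t =
        deriv (halfConv k (fun τ => H (u τ))) t
        + (H' (u t) * u t - H (u t)) * k t
        + ∫ s in (0:ℝ)..t,
            (H (u (t - s)) - H (u t) - H' (u t) * (u (t - s) - u t)) * (-(k' s)) := by
  obtain ⟨k₀, hk₀⟩ := exists_eq_add_integral_of_hasDerivAt hk hk'
  filter_upwards [ae_hasDerivAt_halfConv hT.le hk₀ hk' hu,
    ae_hasDerivAt_halfConv hT.le hk₀ hk' hHu, ae_intervalIntegrable_halfConv_integrand hu hk',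
    ae_intervalIntegrable_halfConv_integrand hHu hk', ae_restrict_mem measurableSet_Ioo]
    with t hderiv_u hderiv_Hu hint_u hint_Hu ht
  have hk'_t : IntervalIntegrable k' volume 0 t :=
    (intervalIntegrable_iff_integrableOn_Ioo_of_le ht.1.le).2
      (hk'.mono_set (Ioo_subset_Ioo_right ht.2.le))
  have hremainder : ∫ s in 0..t,
        (H (u (t - s)) - H (u t) - H' (u t) * (u (t - s) - u t)) * (-(k' s))
      = (H (u t) - H' (u t) * u t) * (∫ s in 0..t, k' s) + H' (u t) * halfConv u k' t
        - halfConv (fun τ => H (u τ)) k' t := by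
    simp only [halfConv, ← intervalIntegral.integral_const_mul]
    rw [← integral_add (hk'_t.const_mul _) (hint_u.const_mul _),
      ← integral_sub ((hk'_t.const_mul _).add (hint_u.const_mul _)) hint_Hu]
    exact integral_congr fun s _ => by ring
  rw [hderiv_u.deriv, hderiv_Hu.deriv, hk₀ t ht, hremainder, halfConv_comm k' u,
    halfConv_comm k' (fun τ => H (u τ))]
  ring

theorem stmt_6 (T : ℝ) (hT : 0 < T) (k k' u H H' : ℝ → ℝ)
    (hk : ∀ t ∈ Set.Ioo 0 T, HasDerivAt k (k' t) t)
    (hk' : IntegrableOn k' (Set.Ioo 0 T))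
    (hkint : IntegrableOn k (Set.Ioo 0 T))
    (hH : ∀ y : ℝ, HasDerivAt H (H' y) y) (hHc : Continuous H')
    (hu : IntegrableOn u (Set.Ioo 0 T))
    (hHu : IntegrableOn (fun t => H (u t)) (Set.Ioo 0 T))
    (hHuu : IntegrableOn (fun t => H' (u t) * u t) (Set.Ioo 0 T))
    (hHuk : IntegrableOn (fun t => H' (u t) * halfConv k' u t) (Set.Ioo 0 T)) :
    ∀ᵐ t ∂(volume.restrict (Set.Ioo 0 T)),
      H' (u t) * deriv (halfConv k u) t =
        deriv (halfConv k (fun τ => H (u τ))) t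
        + (H' (u t) * u t - H (u t)) * k t
        + ∫ s in (0:ℝ)..t,
            (H (u (t - s)) - H (u t) - H' (u t) * (u (t - s) - u t)) * (-(k' s)) :=
  stmt_6_general T hT k k' u H H' hk hk' hu hHu
end

section
/- Let k ∈ W^{1,1}(0,T) be non-negative and non-increasing, H ∈ C¹(ℝ) convex, u₀ ∈ ℝ, and u ∈ L¹(0,T) with H(u), H'(u)u, H'(u)(k'*u) ∈ L¹(0,T). Then for almost all t ∈ (0,T): H'(u(t)) ∂_t(k*(u − u₀))(t) ≥ ∂_t(k*[H(u) − H(u₀)])(t). -/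
open MeasureTheory intervalIntegral

/-!
Write `k x = κ + ∫₀ˣ k'` on `(0, T)`, where `κ = k(0+)`. By Fubini, `k * v` is then the primitive
of `κ v + k' * v` (with `k'` and `v` extended by zero), so by the Lebesgue differentiation theorem
`∂ₜ(k * v) = κ v(t) + (k' * v)(t)` for almost every `t`. Fix such a `t`, put `c = H'(u t)` and
`D τ = c (u τ - u₀) - (H (u τ) - H u₀)`. The difference of the two sides is
`κ D t + (k' * D)(t) ≥ κ D t + D t ∫₀ᵗ k' = k t · D t ≥ 0`: the tangent line of the convex `H` at
`u t` gives `D τ ≤ D t` (and `k' ≤ 0`) for the middle step, and `D t ≥ 0` for the last.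
-/

open Set Filter Topology

lemma ConvexOn.add_mul_sub_le_of_hasDerivAt {S : Set ℝ} {f : ℝ → ℝ} {f' x y : ℝ}
    (hfc : ConvexOn ℝ S f) (hx : x ∈ S) (hy : y ∈ S) (hf : HasDerivAt f f' x) :
    f x + f' * (y - x) ≤ f y := by
  rcases lt_trichotomy x y with hxy | rfl | hxy
  · have h := hfc.le_slope_of_hasDerivAt hx hy hxy hf
    rw [slope_def_field, le_div_iff₀ (sub_pos.2 hxy)] at h
    linarith
  · simp
  · have h := hfc.slope_le_of_hasDerivAt hy hx hxy hf
    rw [slope_def_field, div_le_iff₀ (sub_pos.2 hxy)] at h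
    linarith

lemma exists_eq_add_integral_indicator {k k' : ℝ → ℝ} {a b : ℝ} (hab : a < b)
    (hk : ∀ x ∈ Ioo a b, HasDerivAt k (k' x) x) (hk' : IntegrableOn k' (Ioo a b)) :
    ∃ κ, ∀ x ∈ Ioo a b, k x = κ + ∫ s in a..x, (Ioo a b).indicator k' s := by
  set K := (Ioo a b).indicator k'
  have hK : Integrable K := (integrable_indicator_iff measurableSet_Ioo).2 hk'
  obtain ⟨c, hc⟩ := nonempty_Ioo.2 hab
  refine ⟨k c - ∫ s in a..c, K s, fun x hx => ?_⟩
  have hsub : uIcc x c ⊆ Ioo a b := ordConnected_Ioo.uIcc_subset hx hc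
  have hftc : ∫ s in x..c, K s = k c - k x := by
    rw [intervalIntegral.integral_congr fun s hs => indicator_of_mem (hsub hs) k']
    exact intervalIntegral.integral_eq_sub_of_hasDerivAt (fun s hs => hk s (hsub hs))
      (hk'.mono_set hsub).intervalIntegrable
  have hadd := intervalIntegral.integral_add_adjacent_intervals
    (hK.intervalIntegrable (a := a) (b := x)) (hK.intervalIntegrable (b := c))
  linarith

section Kernel

variable {K V : ℝ → ℝ}

lemma intervalIntegral_eq_zero_of_nonpos (hK0 : ∀ s ≤ 0, K s = 0) {x : ℝ}
    (hx : x ≤ 0) : ∫ s in (0:ℝ)..x, K s = 0 := by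
  rw [intervalIntegral.integral_symm, intervalIntegral.integral_congr (g := fun _ => 0)
    fun s hs => hK0 s (by rw [uIcc_of_le hx] at hs; exact hs.2)]
  simp

lemma integrable_comp_sub_mul_prod (hK : Integrable K) (hV : Integrable V) :
    Integrable (fun p : ℝ × ℝ => K (p.1 - p.2) * V p.2) (volume.prod volume) := by
  simpa only [ContinuousLinearMap.mul_apply', mul_comm] using
    hV.convolution_integrand (ContinuousLinearMap.mul ℝ ℝ) hK

lemma integral_integral_comp_sub_mul (hK : Integrable K) (hK0 : ∀ s ≤ 0, K s = 0)
    (hV : Integrable V) (hV0 : ∀ s ≤ 0, V s = 0) {t : ℝ} (ht : 0 ≤ t) :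
    ∫ s in (0:ℝ)..t, ∫ τ, K (s - τ) * V τ = ∫ τ in (0:ℝ)..t, (∫ s in (0:ℝ)..t - τ, K s) * V τ := by
  have hprod : Integrable (Function.uncurry fun s τ => K (s - τ) * V τ)
      ((volume.restrict (Ioc 0 t)).prod volume) := by
    rw [Measure.restrict_prod_eq_prod_univ]
    exact (integrable_comp_sub_mul_prod hK hV).integrableOn
  have hinner : ∀ τ, ∫ s in Ioc 0 t, K (s - τ) * V τ
      = (Ioc 0 t).indicator (fun τ => (∫ s in (0:ℝ)..t - τ, K s) * V τ) τ := by
    intro τ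
    rw [MeasureTheory.integral_mul_const, ← intervalIntegral.integral_of_le ht,
      intervalIntegral.integral_comp_sub_right (fun s => K s), zero_sub,
      ← intervalIntegral.integral_interval_sub_left hK.intervalIntegrable hK.intervalIntegrable]
    by_cases hτ : τ ≤ 0
    · rw [indicator_of_notMem fun h => hτ.not_gt h.1, hV0 τ hτ, mul_zero]
    rw [intervalIntegral_eq_zero_of_nonpos hK0 (x := -τ) (by linarith), sub_zero]
    by_cases hτt : τ ≤ t
    · rw [indicator_of_mem (show τ ∈ Ioc 0 t from ⟨not_le.1 hτ, hτt⟩)]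
    · rw [indicator_of_notMem fun h => hτt h.2,
        intervalIntegral_eq_zero_of_nonpos hK0 (by linarith), zero_mul]
  rw [intervalIntegral.integral_of_le ht, intervalIntegral.integral_of_le ht,
    integral_integral_swap hprod, ← MeasureTheory.integral_indicator measurableSet_Ioc]
  simp only [hinner]

lemma mul_le_integral_comp_sub_mul {D : ℝ → ℝ} {t : ℝ} (ht : 0 ≤ t) (hK : Integrable K)
    (hK_nonpos : ∀ s, K s ≤ 0) (hK0 : ∀ s ≤ 0, K s = 0) (hD0 : ∀ τ ≤ 0, D τ = 0)
    (hD : ∀ τ ∈ Ioc 0 t, D τ ≤ D t) (hKD : Integrable fun τ => K (t - τ) * D τ) :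
    (∫ s in (0:ℝ)..t, K s) * D t ≤ ∫ τ, K (t - τ) * D τ := by
  have hKt : Integrable fun τ => K (t - τ) * D t := (hK.comp_sub_left t).mul_const _
  calc (∫ s in (0:ℝ)..t, K s) * D t
      = ∫ τ, (Ioc 0 t).indicator (fun τ => K (t - τ) * D t) τ := by
        rw [MeasureTheory.integral_indicator measurableSet_Ioc,
          ← intervalIntegral.integral_of_le ht, intervalIntegral.integral_mul_const, intervalIntegral.integral_comp_sub_left,
          sub_self, sub_zero]
    _ ≤ ∫ τ, K (t - τ) * D τ := by
      refine integral_mono (hKt.indicator measurableSet_Ioc) hKD fun τ => ?_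
      by_cases hτ : τ ∈ Ioc 0 t
      · rw [indicator_of_mem hτ]
        exact mul_le_mul_of_nonpos_left (hD τ hτ) (hK_nonpos _)
      rw [indicator_of_notMem hτ]
      rcases le_or_gt τ 0 with hτ0 | hτ0
      · simp [hD0 τ hτ0]
      · simp [hK0 (t - τ) (by linarith [not_and.1 hτ hτ0])]

end Kernel

section HalfConv

variable {T κ : ℝ} {k K v : ℝ → ℝ}

lemma halfConv_eq_integral_s7 (hrep : ∀ x ∈ Ioo 0 T, k x = κ + ∫ s in (0:ℝ)..x, K s)
    (hK : Integrable K) (hK0 : ∀ s ≤ 0, K s = 0) (hv : IntegrableOn v (Ioo 0 T))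
    {t : ℝ} (ht : t ∈ Ioo 0 T) :
    halfConv k v t = ∫ s in (0:ℝ)..t,
      (κ * (Ioo 0 T).indicator v s + ∫ τ, K (s - τ) * (Ioo 0 T).indicator v τ) := by
  set V := (Ioo 0 T).indicator v
  have hV : Integrable V := (integrable_indicator_iff measurableSet_Ioo).2 hv
  have hV0 : ∀ s ≤ 0, V s = 0 := fun s hs => indicator_of_notMem (fun h => hs.not_gt h.1) v
  have hW : Continuous fun τ => ∫ s in (0:ℝ)..t - τ, K s :=
    (intervalIntegral.continuous_primitive (fun _ _ => hK.intervalIntegrable) 0).comp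
      (continuous_const.sub continuous_id)
  have hkV : halfConv k v t = ∫ τ in (0:ℝ)..t, (κ + ∫ s in (0:ℝ)..t - τ, K s) * V τ := by
    rw [halfConv, intervalIntegral.integral_of_le ht.1.le, intervalIntegral.integral_of_le ht.1.le,
      integral_Ioc_eq_integral_Ioo, integral_Ioc_eq_integral_Ioo]
    refine setIntegral_congr_fun measurableSet_Ioo fun τ hτ => ?_
    rw [hrep (t - τ) ⟨by linarith [hτ.2], by linarith [hτ.1, ht.2]⟩,
      show V τ = v τ from indicator_of_mem (show τ ∈ Ioo 0 T from ⟨hτ.1, hτ.2.trans ht.2⟩) v]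
  simp_rw [hkV, add_mul]
  rw [intervalIntegral.integral_add (hV.intervalIntegrable.const_mul κ)
      (hV.intervalIntegrable.continuousOn_mul hW.continuousOn),
    intervalIntegral.integral_add (hV.intervalIntegrable.const_mul κ)
      (integrable_comp_sub_mul_prod hK hV).integral_prod_left.intervalIntegrable,
    integral_integral_comp_sub_mul hK hK0 hV hV0 ht.1.le]

lemma ae_deriv_halfConv (hrep : ∀ x ∈ Ioo 0 T, k x = κ + ∫ s in (0:ℝ)..x, K s)
    (hK : Integrable K) (hK0 : ∀ s ≤ 0, K s = 0) (hv : IntegrableOn v (Ioo 0 T)) :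
    ∀ᵐ t ∂volume.restrict (Ioo 0 T),
      deriv (halfConv k v) t = κ * v t + ∫ τ, K (t - τ) * (Ioo 0 T).indicator v τ := by
  set V := (Ioo 0 T).indicator v
  have hV : Integrable V := (integrable_indicator_iff measurableSet_Ioo).2 hv
  have hg : Integrable fun s => κ * V s + ∫ τ, K (s - τ) * V τ :=
    (hV.const_mul κ).add (integrable_comp_sub_mul_prod hK hV).integral_prod_left
  filter_upwards [ae_restrict_mem measurableSet_Ioo,
    ae_restrict_of_ae (LocallyIntegrable.ae_hasDerivAt_integral hg.locallyIntegrable)]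
    with t ht hderiv
  have hloc : halfConv k v =ᶠ[𝓝 t] fun x => ∫ s in (0:ℝ)..x, (κ * V s + ∫ τ, K (s - τ) * V τ) :=
    eventually_of_mem (isOpen_Ioo.mem_nhds ht) fun x hx => halfConv_eq_integral_s7 hrep hK hK0 hv hx
  rw [hloc.deriv_eq, (hderiv 0).deriv, show V t = v t from indicator_of_mem ht v]

end HalfConv

lemma add_integral_comp_sub_mul_indicator_le {T κ t c u₀ : ℝ} {K u H : ℝ → ℝ}
    (hK : Integrable K) (hK_nonpos : ∀ s, K s ≤ 0) (hK0 : ∀ s ≤ 0, K s = 0)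
    (hHconv : ConvexOn ℝ univ H) (hH : HasDerivAt H c (u t)) (ht : t ∈ Ioo 0 T)
    (hkt : 0 ≤ κ + ∫ s in (0:ℝ)..t, K s)
    (hi₁ : Integrable fun τ => K (t - τ) * (Ioo 0 T).indicator (fun τ => u τ - u₀) τ)
    (hi₂ : Integrable fun τ => K (t - τ) * (Ioo 0 T).indicator (fun τ => H (u τ) - H u₀) τ) :
    κ * (H (u t) - H u₀) + ∫ τ, K (t - τ) * (Ioo 0 T).indicator (fun τ => H (u τ) - H u₀) τ ≤
      c * (κ * (u t - u₀) + ∫ τ, K (t - τ) * (Ioo 0 T).indicator (fun τ => u τ - u₀) τ) := by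
  set V₁ := (Ioo 0 T).indicator fun τ => u τ - u₀
  set V₂ := (Ioo 0 T).indicator fun τ => H (u τ) - H u₀
  set D := fun τ => c * V₁ τ - V₂ τ
  have hD_eq : ∀ τ ∈ Ioo 0 T, D τ = c * (u τ - u₀) - (H (u τ) - H u₀) := fun τ hτ => by
    simp only [D, V₁, V₂, indicator_of_mem hτ]
  have hD0 : ∀ τ ≤ 0, D τ = 0 := fun τ hτ => by
    simp only [D, V₁, V₂, indicator_of_notMem (fun h : τ ∈ Ioo 0 T => hτ.not_gt h.1), mul_zero,
      sub_zero]
  have hD_le : ∀ τ ∈ Ioc 0 t, D τ ≤ D t := fun τ hτ => by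
    have := hHconv.add_mul_sub_le_of_hasDerivAt (mem_univ _) (mem_univ (u τ)) hH
    rw [hD_eq τ ⟨hτ.1, hτ.2.trans_lt ht.2⟩, hD_eq t ht]
    linarith
  have hDt : 0 ≤ D t := by
    have := hHconv.add_mul_sub_le_of_hasDerivAt (mem_univ _) (mem_univ u₀) hH
    rw [hD_eq t ht]
    linarith
  have hKD : ∫ τ, K (t - τ) * D τ = c * (∫ τ, K (t - τ) * V₁ τ) - ∫ τ, K (t - τ) * V₂ τ := by
    rw [← MeasureTheory.integral_const_mul, ← integral_sub (hi₁.const_mul c) hi₂]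
    congr 1 with τ
    ring
  have hKD_int : Integrable fun τ => K (t - τ) * D τ := by
    refine ((hi₁.const_mul c).sub hi₂).congr (ae_of_all _ fun τ => ?_)
    simp only [D, Pi.sub_apply]
    ring
  have key := mul_le_integral_comp_sub_mul ht.1.le hK hK_nonpos hK0 hD0 hD_le hKD_int
  rw [hKD] at key
  linear_combination key + mul_nonneg hkt hDt + κ * hD_eq t ht

theorem stmt_7_general (T : ℝ) (hT : 0 < T) (k k' u H H' : ℝ → ℝ) (u₀ : ℝ)
    (hk : ∀ t ∈ Set.Ioo 0 T, HasDerivAt k (k' t) t)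
    (hk'int : IntegrableOn k' (Set.Ioo 0 T))
    (hknonneg : ∀ t ∈ Set.Ioo 0 T, 0 ≤ k t)
    (hkmono : ∀ s ∈ Set.Ioo 0 T, ∀ t ∈ Set.Ioo 0 T, s ≤ t → k t ≤ k s)
    (hH : ∀ y : ℝ, HasDerivAt H (H' y) y)
    (hHconv : ConvexOn ℝ Set.univ H)
    (hu : IntegrableOn u (Set.Ioo 0 T))
    (hHu : IntegrableOn (fun t => H (u t)) (Set.Ioo 0 T)) :
    ∀ᵐ t ∂(volume.restrict (Set.Ioo 0 T)),
      H' (u t) * deriv (halfConv k (fun τ => u τ - u₀)) t ≥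
        deriv (halfConv k (fun τ => H (u τ) - H u₀)) t := by
  set K := (Ioo 0 T).indicator k'
  have hK : Integrable K := (integrable_indicator_iff measurableSet_Ioo).2 hk'int
  have hK0 : ∀ s ≤ 0, K s = 0 := fun s hs => indicator_of_notMem (fun h => hs.not_gt h.1) k'
  have hK_nonpos : ∀ s, K s ≤ 0 := indicator_nonpos fun s hs => by
    simpa [derivWithin_of_isOpen isOpen_Ioo hs, (hk s hs).deriv] using
      (show AntitoneOn k (Ioo 0 T) from hkmono).derivWithin_nonpos (x := s)
  obtain ⟨κ, hrep⟩ := exists_eq_add_integral_indicator hT hk hk'int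
  have hv₁ : IntegrableOn (fun τ => u τ - u₀) (Ioo 0 T) :=
    hu.sub (integrableOn_const measure_Ioo_lt_top.ne)
  have hv₂ : IntegrableOn (fun τ => H (u τ) - H u₀) (Ioo 0 T) :=
    hHu.sub (integrableOn_const measure_Ioo_lt_top.ne)
  have hKV_int (v : ℝ → ℝ) (hv : IntegrableOn v (Ioo 0 T)) :
      ∀ᵐ t, Integrable fun τ => K (t - τ) * (Ioo 0 T).indicator v τ :=
    (integrable_comp_sub_mul_prod hK
      ((integrable_indicator_iff measurableSet_Ioo).2 hv)).prod_right_ae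
  filter_upwards [ae_restrict_mem measurableSet_Ioo, ae_deriv_halfConv hrep hK hK0 hv₁,
    ae_deriv_halfConv hrep hK hK0 hv₂, ae_restrict_of_ae (hKV_int _ hv₁),
    ae_restrict_of_ae (hKV_int _ hv₂)]
    with t ht hd₁ hd₂ hi₁ hi₂
  rw [ge_iff_le, hd₁, hd₂]
  exact add_integral_comp_sub_mul_indicator_le hK hK_nonpos hK0 hHconv (hH (u t)) ht
    (hrep t ht ▸ hknonneg t ht) hi₁ hi₂

theorem stmt_7 (T : ℝ) (hT : 0 < T) (k k' u H H' : ℝ → ℝ) (u₀ : ℝ)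
    (hk : ∀ t ∈ Set.Ioo 0 T, HasDerivAt k (k' t) t)
    (hk'int : IntegrableOn k' (Set.Ioo 0 T))
    (hkint : IntegrableOn k (Set.Ioo 0 T))
    (hknonneg : ∀ t ∈ Set.Ioo 0 T, 0 ≤ k t)
    (hkmono : ∀ s ∈ Set.Ioo 0 T, ∀ t ∈ Set.Ioo 0 T, s ≤ t → k t ≤ k s)
    (hH : ∀ y : ℝ, HasDerivAt H (H' y) y) (hHc : Continuous H')
    (hHconv : ConvexOn ℝ Set.univ H)
    (hu : IntegrableOn u (Set.Ioo 0 T))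
    (hHu : IntegrableOn (fun t => H (u t)) (Set.Ioo 0 T))
    (hHuu : IntegrableOn (fun t => H' (u t) * u t) (Set.Ioo 0 T))
    (hHuk : IntegrableOn (fun t => H' (u t) * halfConv k' u t) (Set.Ioo 0 T)) :
    ∀ᵐ t ∂(volume.restrict (Set.Ioo 0 T)),
      H' (u t) * deriv (halfConv k (fun τ => u τ - u₀)) t ≥
        deriv (halfConv k (fun τ => H (u τ) - H u₀)) t :=
  stmt_7_general T hT k k' u H H' u₀ hk hk'int hknonneg hkmono hH hHconv hu hHu
end
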